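/- Let N ≥ 2 and let u : ℝ^N → (0,∞) be continuous and separable in ℝ^N. Suppose that u is not radially symmetric about any point: for every x ∈ ℝ^N there exist y, z ∈ ℝ^N with |y − x| = |z − x| and u(y) ≠ u(z). Then for every x ∈ ℝ^N there exists a unique line L ⊂ ℝ^N with x ∈ L such that L is a symmetry axis of u; consequently, if y lies on the symmetry axis through x, then the symmetry axis through y equals the symmetry axis through x. -/

import Mathlib

open scoped RealInnerProductSpace

/-- The reflection of a real inner-product space across the hyperplane
`∂H = {x : ⟪a,x⟫ = c}` bounding the open half-space `H = {x : ⟪a,x⟫ > c}`. -/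
noncomputable def reflectHyp {E : Type*} [NormedAddCommGroup E] [InnerProductSpace ℝ E]
    (a : E) (c : ℝ) (x : E) : E :=
  x - ((2 * (⟪a, x⟫ - c)) / ⟪a, a⟫) • a

/-- The line through `p` with direction `d` is a symmetry axis of `u`: whenever `y, z`
have the same orthogonal projection `q` onto the line and `|y − q| = |z − q|`, one has
`u y = u z`. -/
def IsSymAxis {E : Type*} [NormedAddCommGroup E] [InnerProductSpace ℝ E]
    (u : E → ℝ) (p d : E) : Prop :=
  ∀ q y z : E, (∃ t : ℝ, q = p + t • d) →
    ⟪d, y - q⟫ = 0 → ⟪d, z - q⟫ = 0 → ‖y - q‖ = ‖z - q‖ → u y = u z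

namespace SepAux

variable {E : Type*} [NormedAddCommGroup E] [InnerProductSpace ℝ E]

/-- `u` is nondecreasing in direction `d`. -/
def Nondecr (u : E → ℝ) (d : E) : Prop := ∀ x : E, ∀ t : ℝ, 0 ≤ t → u x ≤ u (x + t • d)

/-- `u` is constant in direction `d`. -/
def ConstDir (u : E → ℝ) (d : E) : Prop := ∀ x : E, ∀ t : ℝ, u (x + t • d) = u x

/-- `u` is symmetric w.r.t. the hyperplane `⟪a,·⟫ = c`. -/
def SymAt (u : E → ℝ) (a : E) (c : ℝ) : Prop := ∀ x, u (reflectHyp a c x) = u x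

/-- Separability hypothesis, abstracted. -/
def Separable (u : E → ℝ) : Prop := ∀ (a : E) (c : ℝ), a ≠ 0 →
      (∀ x, c < ⟪a, x⟫ → u (reflectHyp a c x) ≤ u x) ∨
      (∀ x, c < ⟪a, x⟫ → u x ≤ u (reflectHyp a c x))

variable {u : E → ℝ}

lemma inner_reflect (a : E) (ha : ⟪a,a⟫ ≠ (0:ℝ)) (c : ℝ) (x : E) :
    ⟪a, reflectHyp a c x⟫ = 2*c - ⟪a, x⟫ := by
  simp only [reflectHyp, inner_sub_right, real_inner_smul_right]
  field_simp
  ring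

lemma reflect_reflect (a : E) (ha : ⟪a,a⟫ ≠ (0:ℝ)) (c : ℝ) (x : E) :
    reflectHyp a c (reflectHyp a c x) = x := by
  have h := inner_reflect a ha c x
  rw [reflectHyp, h]
  rw [reflectHyp]
  match_scalars <;> ring

lemma reflect_self (a : E) (c : ℝ) (x : E) (h : ⟪a,x⟫ = c) : reflectHyp a c x = x := by
  simp [reflectHyp, h]

lemma reflect_continuous (a : E) (x : E) : Continuous fun c : ℝ => reflectHyp a c x := by
  simp only [reflectHyp]
  fun_prop

/-- The trichotomy: each direction is nondecreasing, nonincreasing, or has a symmetry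
hyperplane. -/
theorem trichotomy (hcont : Continuous u) (hsep : Separable u)
    (a : E) (ha : a ≠ 0) :
    Nondecr u a ∨ Nondecr u (-a) ∨ ∃ c, SymAt u a c := by
  have haa : ⟪a,a⟫ ≠ (0:ℝ) := inner_self_ne_zero.mpr ha
  have hQ : (0:ℝ) < ⟪a,a⟫ := by
    have h : 0 < ‖a‖ := norm_pos_iff.mpr ha
    rw [real_inner_self_eq_norm_sq]; positivity
  set A := {c : ℝ | ∀ x, c < ⟪a,x⟫ → u (reflectHyp a c x) ≤ u x} with hA
  set B := {c : ℝ | ∀ x, c < ⟪a,x⟫ → u x ≤ u (reflectHyp a c x)} with hB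
  have hABu : A ∪ B = Set.univ := by
    ext c; simp only [Set.mem_union, Set.mem_univ, iff_true, hA, hB, Set.mem_setOf_eq]
    exact hsep a c ha
  have hclosed : ∀ (f : E → ℝ → Prop),
      (∀ x, IsClosed {c : ℝ | f x c}) → IsClosed {c : ℝ | ∀ x, f x c} := by
    intro f h
    have : {c : ℝ | ∀ x, f x c} = ⋂ x, {c | f x c} := by ext; simp
    rw [this]; exact isClosed_iInter h
  have hclosed1 : ∀ x : E, IsClosed {c : ℝ | c < ⟪a,x⟫ → u (reflectHyp a c x) ≤ u x} := by
    intro x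
    have : {c : ℝ | c < ⟪a,x⟫ → u (reflectHyp a c x) ≤ u x}
        = {c : ℝ | ⟪a,x⟫ ≤ c} ∪ {c : ℝ | u (reflectHyp a c x) ≤ u x} := by
      ext c; simp only [Set.mem_setOf_eq, Set.mem_union]
      constructor
      · intro h; rcases le_or_gt (⟪a,x⟫:ℝ) c with h'|h'
        · exact Or.inl h'
        · exact Or.inr (h h')
      · intro h hc; rcases h with h|h
        · exact absurd hc (not_lt.mpr h)
        · exact h
    rw [this]
    exact (isClosed_le continuous_const continuous_id).union
      (isClosed_le (hcont.comp (reflect_continuous a x)) continuous_const)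
  have hclosed2 : ∀ x : E, IsClosed {c : ℝ | c < ⟪a,x⟫ → u x ≤ u (reflectHyp a c x)} := by
    intro x
    have : {c : ℝ | c < ⟪a,x⟫ → u x ≤ u (reflectHyp a c x)}
        = {c : ℝ | ⟪a,x⟫ ≤ c} ∪ {c : ℝ | u x ≤ u (reflectHyp a c x)} := by
      ext c; simp only [Set.mem_setOf_eq, Set.mem_union]
      constructor
      · intro h; rcases le_or_gt (⟪a,x⟫:ℝ) c with h'|h'
        · exact Or.inl h'
        · exact Or.inr (h h')
      · intro h hc; rcases h with h|h
        · exact absurd hc (not_lt.mpr h)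
        · exact h
    rw [this]
    exact (isClosed_le continuous_const continuous_id).union
      (isClosed_le continuous_const (hcont.comp (reflect_continuous a x)))
  have hAc : IsClosed A := hclosed _ hclosed1
  have hBc : IsClosed B := hclosed _ hclosed2
  by_cases hne : (A ∩ B).Nonempty
  · right; right
    obtain ⟨c, hcA, hcB⟩ := hne
    refine ⟨c, fun x => ?_⟩
    rcases lt_trichotomy (⟪a,x⟫:ℝ) c with h|h|h
    · have hy : c < ⟪a, reflectHyp a c x⟫ := by rw [inner_reflect a haa c x]; linarith
      have h1 := hcA _ hy
      have h2 := hcB _ hy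
      rw [reflect_reflect a haa c x] at h1 h2
      exact le_antisymm h2 h1
    · rw [reflect_self a c x h]
    · exact le_antisymm (hcA x h) (hcB x h)
  · -- A, B disjoint closed cover of ℝ: one is everything
    have hdisj : A ∩ B = ∅ := Set.not_nonempty_iff_eq_empty.mp hne
    have hcompl : B = Aᶜ := by
      apply Set.eq_of_subset_of_subset
      · intro c hc
        intro hcA
        exact Set.eq_empty_iff_forall_notMem.mp hdisj c ⟨hcA, hc⟩
      · intro c hc
        rcases (Set.eq_univ_iff_forall.mp hABu c) with h|h
        · exact absurd h hc
        · exact h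
    have hclopen : IsClopen A := ⟨hAc, by rw [← isClosed_compl_iff, ← hcompl]; exact hBc⟩
    rcases isClopen_iff.mp hclopen with hAe|hAu
    · -- A empty, B = univ : Nondecr (-a)
      right; left
      have hBu : B = Set.univ := by rw [hcompl, hAe, Set.compl_empty]
      intro x t ht
      rcases eq_or_lt_of_le ht with h0|h0
      · simp [← h0]
      · have hside : (⟪a,x⟫ - t*⟪a,a⟫/2 : ℝ) < ⟪a,x⟫ := by
          have : t*⟪a,a⟫/2 > 0 := by positivity
          linarith
        have hb := (Set.eq_univ_iff_forall.mp hBu) (⟪a,x⟫ - t*⟪a,a⟫/2) x hside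
        have hre : reflectHyp a (⟪a,x⟫ - t*⟪a,a⟫/2) x = x + t • (-a) := by
          rw [reflectHyp]
          match_scalars
          · norm_num
          · field_simp
            try ring
        rw [hre] at hb
        exact hb
    · -- A = univ : Nondecr a
      left
      intro x t ht
      rcases eq_or_lt_of_le ht with h0|h0
      · simp [← h0]
      · have hi : ⟪a, x + t • a⟫ = ⟪a,x⟫ + t*⟪a,a⟫ := by
          rw [inner_add_right, real_inner_smul_right]
        have hside : (⟪a,x⟫ + t*⟪a,a⟫/2 : ℝ) < ⟪a, x + t • a⟫ := by
          rw [hi]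
          have : t*⟪a,a⟫/2 > 0 := by positivity
          linarith
        have hb := (Set.eq_univ_iff_forall.mp hAu) (⟪a,x⟫ + t*⟪a,a⟫/2) (x + t • a) hside
        have hre : reflectHyp a (⟪a,x⟫ + t*⟪a,a⟫/2) (x + t • a) = x := by
          rw [reflectHyp, hi]
          match_scalars
          · norm_num
          · field_simp
            try ring
        rw [hre] at hb
        exact hb


lemma nondecr_add {d e : E} (hd : Nondecr u d) (he : Nondecr u e) : Nondecr u (d + e) := by
  intro x t ht
  have h1 := hd x t ht
  have h2 := he (x + t • d) t ht
  have he2 : x + t • d + t • e = x + t • (d + e) := by module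
  rw [he2] at h2
  exact le_trans h1 h2

lemma nondecr_smul {d : E} {s : ℝ} (hs : 0 ≤ s) (hd : Nondecr u d) : Nondecr u (s • d) := by
  intro x t ht
  have := hd x (t*s) (mul_nonneg ht hs)
  have he : x + (t*s) • d = x + t • (s • d) := by module
  rwa [he] at this

lemma nondecr_of_smul_pos {d : E} {s : ℝ} (hs : 0 < s) (hd : Nondecr u (s • d)) :
    Nondecr u d := by
  have := nondecr_smul (le_of_lt (inv_pos.mpr hs)) hd
  have he : s⁻¹ • s • d = d := by
    rw [smul_smul, inv_mul_cancel₀ (ne_of_gt hs), one_smul]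
  rwa [he] at this

lemma nondecr_neg_of_const {d : E} (h : ConstDir u d) : Nondecr u d :=
  fun x t _ => le_of_eq (h x t).symm

lemma const_of_nondecr_both {d : E} (hd : Nondecr u d) (hd' : Nondecr u (-d)) :
    ConstDir u d := by
  intro x t
  rcases le_total 0 t with ht|ht
  · refine le_antisymm ?_ (hd x t ht)
    have h2 := hd' (x + t • d) t ht
    have he : x + t • d + t • -d = x := by module
    rwa [he] at h2
  · have h1 := hd' x (-t) (by linarith)
    have he1 : x + (-t) • -d = x + t • d := by module
    rw [he1] at h1
    refine le_antisymm ?_ h1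
    have h2 := hd (x + t • d) (-t) (by linarith)
    have he2 : x + t • d + (-t) • d = x := by module
    rwa [he2] at h2

lemma constDir_smul {d : E} (s : ℝ) (h : ConstDir u d) : ConstDir u (s • d) := by
  intro x t
  have := h x (t*s)
  have he : x + (t*s) • d = x + t • (s • d) := by module
  rwa [he] at this

lemma constDir_add {d e : E} (h : ConstDir u d) (h' : ConstDir u e) : ConstDir u (d + e) := by
  intro x t
  have h1 := h x t
  have h2 := h' (x + t • d) t
  have he : x + t • d + t • e = x + t • (d + e) := by module
  rw [he] at h2
  rw [h2, h1]

lemma constDir_zero : ConstDir u (0 : E) := by intro x t; simp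

/-- Symmetric hyperplane plus monotonicity in the normal direction forces constancy. -/
lemma const_of_sym_nondecr {a : E} (ha : a ≠ 0) {c : ℝ}
    (hsym : SymAt u a c) (hmono : Nondecr u a) : ConstDir u a := by
  have haa : ⟪a,a⟫ ≠ (0:ℝ) := inner_self_ne_zero.mpr ha
  intro x t
  have hrefl : ∀ s : ℝ, u (x + (2*((c - ⟪a,x⟫)/⟪a,a⟫) - s) • a) = u (x + s • a) := by
    intro s
    have h := hsym (x + s • a)
    have he : reflectHyp a c (x + s • a) = x + (2*((c - ⟪a,x⟫)/⟪a,a⟫) - s) • a := by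
      rw [reflectHyp, inner_add_right, real_inner_smul_right]
      match_scalars
      · norm_num
      · field_simp
        ring
    rwa [he] at h
  set m : ℝ := (c - ⟪a,x⟫)/⟪a,a⟫ with hm
  have hg : ∀ s r : ℝ, s ≤ r → u (x + s • a) ≤ u (x + r • a) := by
    intro s r hsr
    have h := hmono (x + s • a) (r - s) (by linarith)
    have he : x + s • a + (r - s) • a = x + r • a := by module
    rwa [he] at h
  have key : ∀ s r : ℝ, s ≤ r → u (x + r • a) ≤ u (x + s • a) := by
    intro s r hsr
    by_cases hc : 2*m - r ≤ s
    · have h := hg (2*m - r) s hc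
      rwa [hrefl r] at h
    · push_neg at hc
      have h := hg r (2*m - s) (by linarith)
      rwa [hrefl s] at h
  have hz : x + (0:ℝ) • a = x := by simp
  rcases le_total 0 t with ht|ht
  · have := le_antisymm (key 0 t ht) (hg 0 t ht)
    rwa [hz] at this
  · have := le_antisymm (hg t 0 ht) (key t 0 ht)
    rwa [hz] at this

lemma reflect_comp_reflect {a : E} (haa : ⟪a,a⟫ ≠ (0:ℝ)) (c₀ c₁ : ℝ) (x : E) :
    reflectHyp a c₀ (reflectHyp a c₁ x) = x - ((2*(c₁ - c₀))/⟪a,a⟫) • a := by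
  simp only [reflectHyp, inner_sub_right, real_inner_smul_right]
  match_scalars
  · norm_num
  · field_simp
    ring

lemma period_of_two_sym {a : E} (haa : ⟪a,a⟫ ≠ (0:ℝ)) {c₀ c₁ : ℝ}
    (h0 : SymAt u a c₀) (h1 : SymAt u a c₁) :
    ∀ x, u (x + ((2*(c₁-c₀))/⟪a,a⟫) • a) = u x := by
  have key : ∀ y, u (y - ((2*(c₁-c₀))/⟪a,a⟫) • a) = u y := by
    intro y
    have h := h0 (reflectHyp a c₁ y)
    rw [reflect_comp_reflect haa c₀ c₁ y, h1 y] at h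
    exact h
  intro x
  have h := key (x + ((2*(c₁-c₀))/⟪a,a⟫) • a)
  have he : x + ((2*(c₁-c₀))/⟪a,a⟫) • a - ((2*(c₁-c₀))/⟪a,a⟫) • a = x := by module
  rw [he] at h
  exact h.symm

lemma reflect_shift {a : E} (haa : ⟪a,a⟫ ≠ (0:ℝ)) (c₀ c' : ℝ) (x : E) :
    reflectHyp a c' x = reflectHyp a c₀ x + ((2*(c'-c₀))/⟪a,a⟫) • a := by
  rw [reflectHyp, reflectHyp]
  match_scalars
  field_simp
  ring

/-- Between two symmetry hyperplanes there is a symmetric hyperplane in the middle. -/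
lemma sym_mid (hsep : Separable u) {a : E} (ha : a ≠ 0) {c₀ c₁ : ℝ} (hlt : c₀ < c₁)
    (h0 : SymAt u a c₀) (h1 : SymAt u a c₁) : SymAt u a ((c₀+c₁)/2) := by
  have haa : ⟪a,a⟫ ≠ (0:ℝ) := inner_self_ne_zero.mpr ha
  have hQ : (0:ℝ) < ⟪a,a⟫ := by
    have h : 0 < ‖a‖ := norm_pos_iff.mpr ha
    rw [real_inner_self_eq_norm_sq]; positivity
  set P : ℝ := (2*(c₁-c₀))/⟪a,a⟫ with hP
  have hPpos : 0 < P := by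
    rw [hP]
    have : 0 < c₁ - c₀ := by linarith
    positivity
  have hper : ∀ x, u (x + P • a) = u x := period_of_two_sym haa h0 h1
  have hperk : ∀ (k:ℕ) (x : E), u (x + ((k:ℝ)*P) • a) = u x := by
    intro k
    induction k with
    | zero => intro x; simp
    | succ n ih =>
      intro x
      have he : x + (((n:ℝ)+1)*P) • a = (x + P • a) + ((n:ℝ)*P) • a := by module
      push_cast
      rw [he, ih, hper]
  have hback : ∀ y, u (y - P • a) = u y := by
    intro y
    have h := hper (y - P • a)
    have he : y - P • a + P • a = y := by module
    rw [he] at h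
    exact h.symm
  -- key inequality from separability at the midpoint
  have main : ∀ y, u (y - (P/2) • a) = u y := by
    have hmidrefl : ∀ x, u (reflectHyp a ((c₀+c₁)/2) x) = u (x - (P/2) • a) := by
      intro x
      have h := h0 (reflectHyp a ((c₀+c₁)/2) x)
      rw [reflect_comp_reflect haa c₀ ((c₀+c₁)/2) x] at h
      have he : x - ((2*((c₀+c₁)/2 - c₀))/⟪a,a⟫) • a = x - (P/2) • a := by
        rw [hP]
        match_scalars
        field_simp
        ring
      rw [he] at h
      exact h.symm
    have harch : ∀ y : E, ∃ k : ℕ, (c₀+c₁)/2 < ⟪a, y + ((k:ℝ)*P) • a⟫ := by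
      intro y
      obtain ⟨k, hk⟩ := exists_nat_gt (((c₀+c₁)/2 - ⟪a,y⟫)/(P*⟪a,a⟫))
      refine ⟨k, ?_⟩
      rw [inner_add_right, real_inner_smul_right]
      have hPQ : 0 < P*⟪a,a⟫ := by positivity
      have := (div_lt_iff₀ hPQ).mp hk
      nlinarith [this]
    rcases hsep a ((c₀+c₁)/2) ha with hca|hcb
    · -- u (x - (P/2)•a) ≤ u x on the halfspace, hence everywhere
      have hle : ∀ y, u (y - (P/2) • a) ≤ u y := by
        intro y
        obtain ⟨k, hk⟩ := harch y
        have h := hca _ hk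
        rw [hmidrefl] at h
        have he1 : y + ((k:ℝ)*P) • a - (P/2) • a = (y - (P/2) • a) + ((k:ℝ)*P) • a := by
          module
        rw [he1, hperk k (y - (P/2) • a), hperk k y] at h
        exact h
      intro y
      refine le_antisymm (hle y) ?_
      have h := hle (y - (P/2) • a)
      have he : y - (P/2) • a - (P/2) • a = y - P • a := by module
      rw [he, hback y] at h
      exact h
    · have hge : ∀ y, u y ≤ u (y - (P/2) • a) := by
        intro y
        obtain ⟨k, hk⟩ := harch y
        have h := hcb _ hk
        rw [hmidrefl] at h
        have he1 : y + ((k:ℝ)*P) • a - (P/2) • a = (y - (P/2) • a) + ((k:ℝ)*P) • a := by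
          module
        rw [he1, hperk k (y - (P/2) • a), hperk k y] at h
        exact h
      intro y
      refine le_antisymm ?_ (hge y)
      have h := hge (y - (P/2) • a)
      have he : y - (P/2) • a - (P/2) • a = y - P • a := by module
      rw [he, hback y] at h
      exact h
  intro x
  have he : reflectHyp a ((c₀+c₁)/2) x = reflectHyp a c₀ x + (P/2) • a := by
    rw [reflect_shift haa c₀ ((c₀+c₁)/2) x, hP]
    match_scalars
    field_simp
    ring
  rw [he]
  have h := main (reflectHyp a c₀ x + (P/2) • a)
  have he2 : reflectHyp a c₀ x + (P/2) • a - (P/2) • a = reflectHyp a c₀ x := by module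
  rw [he2] at h
  rw [← h, h0 x]

/-- Two distinct symmetry hyperplanes with the same normal force constancy in that
direction. -/
lemma const_of_two_sym (hcont : Continuous u) (hsep : Separable u) {a : E} (ha : a ≠ 0)
    {c₀ c₁ : ℝ} (hlt : c₀ < c₁) (h0 : SymAt u a c₀) (h1 : SymAt u a c₁) : ConstDir u a := by
  have haa : ⟪a,a⟫ ≠ (0:ℝ) := inner_self_ne_zero.mpr ha
  have hQ : (0:ℝ) < ⟪a,a⟫ := by
    have h : 0 < ‖a‖ := norm_pos_iff.mpr ha
    rw [real_inner_self_eq_norm_sq]; positivity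
  have hseq : ∀ n : ℕ, SymAt u a (c₀ + (c₁-c₀)/2^n) := by
    intro n
    induction n with
    | zero => simpa using h1
    | succ n ih =>
      have hltn : c₀ < c₀ + (c₁-c₀)/2^n := by
        have h2 : (0:ℝ) < (c₁-c₀)/2^n := by
          have : (0:ℝ) < c₁ - c₀ := by linarith
          positivity
        linarith
      have hmid := sym_mid hsep ha hltn h0 ih
      have he : (c₀ + (c₀ + (c₁-c₀)/2^n))/2 = c₀ + (c₁-c₀)/2^(n+1) := by ring
      rwa [he] at hmid
  set C : ℝ := 2*(c₁-c₀)/⟪a,a⟫ with hC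
  have hCpos : 0 < C := by
    rw [hC]
    have : (0:ℝ) < c₁ - c₀ := by linarith
    positivity
  set Pn : ℕ → ℝ := fun n => C * (2⁻¹:ℝ)^n with hPn
  have hPnpos : ∀ n, 0 < Pn n := by
    intro n; rw [hPn]
    positivity
  have hper : ∀ n : ℕ, ∀ y, u (y + Pn n • a) = u y := by
    intro n y
    have h := period_of_two_sym haa h0 (hseq n) y
    have he : (2*(c₀ + (c₁-c₀)/2^n - c₀))/⟪a,a⟫ = Pn n := by
      rw [hPn, hC]
      field_simp
      rw [mul_assoc, ← mul_pow, mul_one_div_cancel two_ne_zero, one_pow, mul_one]; ring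
    rwa [he] at h
  have hstep : ∀ n (s : ℝ) (y : E), u (y + ((s+1) * Pn n) • a) = u (y + (s * Pn n) • a) := by
    intro n s y
    have h := hper n (y + (s * Pn n) • a)
    have he : y + (s * Pn n) • a + Pn n • a = y + ((s+1) * Pn n) • a := by module
    rwa [he] at h
  have hperZ : ∀ n (k : ℤ) (y : E), u (y + ((k:ℝ) * Pn n) • a) = u y := by
    intro n k
    induction k using Int.induction_on with
    | zero => intro y; simp
    | succ i ih =>
      intro y
      have h := hstep n (i:ℝ) y
      push_cast
      push_cast at ih
      rw [h]
      exact ih y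
    | pred i ih =>
      intro y
      have h := hstep n (-(i:ℝ)-1) y
      have he : (-(i:ℝ)-1+1) = -(i:ℝ) := by ring
      rw [he] at h
      push_cast
      push_cast at ih
      rw [← h]
      exact ih y
  intro x t
  set r : ℕ → ℝ := fun n => t - (⌊t / Pn n⌋ : ℝ) * Pn n with hr
  have hrn : ∀ n, r n = t - (⌊t / Pn n⌋ : ℝ) * Pn n := fun n => rfl
  have hr0 : ∀ n, 0 ≤ r n := by
    intro n
    have h := Int.floor_le (t / Pn n)
    have h2 := (le_div_iff₀ (hPnpos n)).mp h
    rw [hrn]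
    linarith
  have hrlt : ∀ n, r n ≤ Pn n := by
    intro n
    have h := Int.lt_floor_add_one (t / Pn n)
    have h2 := (div_lt_iff₀ (hPnpos n)).mp h
    rw [hrn]
    nlinarith [hPnpos n]
  have heq : ∀ n, u (x + t • a) = u (x + r n • a) := by
    intro n
    have he : x + t • a = (x + r n • a) + ((((⌊t / Pn n⌋ : ℤ):ℝ)) * Pn n) • a := by
      rw [hrn]
      match_scalars <;> ring
    rw [he, hperZ n ⌊t / Pn n⌋ (x + r n • a)]
  have hPn0 : Filter.Tendsto Pn Filter.atTop (nhds 0) := by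
    rw [hPn]
    have h := tendsto_pow_atTop_nhds_zero_of_lt_one (by norm_num : (0:ℝ) ≤ 2⁻¹)
      (by norm_num : (2⁻¹:ℝ) < 1)
    have := h.const_mul C
    simpa using this
  have hrt : Filter.Tendsto r Filter.atTop (nhds 0) :=
    squeeze_zero hr0 hrlt hPn0
  have hx : Filter.Tendsto (fun n => x + r n • a) Filter.atTop (nhds x) := by
    have h : Filter.Tendsto (fun n => r n • a) Filter.atTop (nhds ((0:ℝ) • a)) :=
      Filter.Tendsto.smul_const hrt a
    rw [zero_smul] at h
    have h2 := (tendsto_const_nhds : Filter.Tendsto (fun _ : ℕ => x) Filter.atTop (nhds x)).add h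
    simpa using h2
  have hu : Filter.Tendsto (fun n => u (x + r n • a)) Filter.atTop (nhds (u x)) :=
    (hcont.tendsto x).comp hx
  have hconst : Filter.Tendsto (fun n => u (x + r n • a)) Filter.atTop
      (nhds (u (x + t • a))) := by
    have : (fun n => u (x + r n • a)) = fun _ => u (x + t • a) := by
      funext n; exact (heq n).symm
    rw [this]
    exact tendsto_const_nhds
  exact tendsto_nhds_unique hconst hu


lemma reflected_dir_inner {e w : E} (he : ⟪e,e⟫ = (1:ℝ)) (hw : ⟪w,w⟫ = (1:ℝ)) :
    ⟪w - (2*⟪e,w⟫) • e, w - (2*⟪e,w⟫) • e⟫ = (1:ℝ) := by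
  have hcomm : ⟪w,e⟫ = ⟪e,w⟫ := real_inner_comm e w
  simp only [inner_sub_left, inner_sub_right, real_inner_smul_left, real_inner_smul_right,
    he, hw, hcomm]
  ring

lemma reflect_conj {e w : E} (he : ⟪e,e⟫ = (1:ℝ)) (hw : ⟪w,w⟫ = (1:ℝ)) (a b : ℝ) (x : E) :
    reflectHyp e a (reflectHyp (w - (2*⟪e,w⟫) • e) (b - 2*⟪w,e⟫*a) x)
      = reflectHyp w b (reflectHyp e a x) := by
  have hcomm : ⟪w,e⟫ = ⟪e,w⟫ := real_inner_comm e w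
  simp only [reflectHyp, reflected_dir_inner he hw, he, hw, div_one]
  simp only [inner_sub_right, inner_sub_left, real_inner_smul_left, real_inner_smul_right,
    he, hw, hcomm]
  match_scalars <;> ring

lemma symAt_reflect {e w : E} (he : ⟪e,e⟫ = (1:ℝ)) (hw : ⟪w,w⟫ = (1:ℝ)) {a b : ℝ}
    (hse : SymAt u e a) (hsw : SymAt u w b) :
    SymAt u (w - (2*⟪e,w⟫) • e) (b - 2*⟪w,e⟫*a) := by
  intro x
  have h := reflect_conj he hw a b x
  calc u (reflectHyp (w - (2*⟪e,w⟫) • e) (b - 2*⟪w,e⟫*a) x)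
      = u (reflectHyp e a (reflectHyp (w - (2*⟪e,w⟫) • e) (b - 2*⟪w,e⟫*a) x)) := (hse _).symm
    _ = u (reflectHyp w b (reflectHyp e a x)) := by rw [h]
    _ = u (reflectHyp e a x) := hsw _
    _ = u x := hse x

lemma nondecr_reflect {e d : E} (he : ⟪e,e⟫ = (1:ℝ)) {a : ℝ} (hsym : SymAt u e a)
    (hd : Nondecr u d) : Nondecr u (d - (2*⟪e,d⟫) • e) := by
  intro x t ht
  have key : ∀ y : E,
      reflectHyp e a (y + t • (d - (2*⟪e,d⟫) • e)) = reflectHyp e a y + t • d := by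
    intro y
    simp only [reflectHyp, inner_add_right, inner_sub_right, real_inner_smul_right, he, div_one]
    match_scalars <;> ring
  calc u x = u (reflectHyp e a x) := (hsym x).symm
    _ ≤ u (reflectHyp e a x + t • d) := hd _ t ht
    _ = u (reflectHyp e a (x + t • (d - (2*⟪e,d⟫) • e))) := by rw [key x]
    _ = u (x + t • (d - (2*⟪e,d⟫) • e)) := hsym _

variable (u) in
/-- The subspace of directions along which `u` is constant. -/
def constSpace : Submodule ℝ E where
  carrier := {d | ConstDir u d}
  add_mem' := fun h h' => constDir_add h h'
  zero_mem' := constDir_zero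
  smul_mem' := fun s d h => constDir_smul s h

lemma mem_constSpace {d : E} : d ∈ constSpace u ↔ ConstDir u d := Iff.rfl

lemma eq_of_sub_mem_constSpace {x y : E} (h : x - y ∈ constSpace u) : u x = u y := by
  have h1 := (mem_constSpace.mp h) y 1
  rw [one_smul] at h1
  have h2 : y + (x - y) = x := by abel
  rwa [h2] at h1


section Planar

open Real

/-- In a 2-plane spanned by orthonormal `d, d₂` along which `u` has no constant
direction, `u` cannot be nondecreasing in the direction `d`. -/
lemma planar_no_mono (hcont : Continuous u) (hsep : Separable u)
    {d d₂ : E} (hd : ⟪d,d⟫ = (1:ℝ)) (hd₂ : ⟪d₂,d₂⟫ = (1:ℝ)) (hdd : ⟪d,d₂⟫ = (0:ℝ))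
    (hnoconst : ∀ θ : ℝ, ¬ ConstDir u (Real.cos θ • d + Real.sin θ • d₂))
    (hmono : Nondecr u d) : False := by
  have hdd' : ⟪d₂,d⟫ = (0:ℝ) := by rw [real_inner_comm]; exact hdd
  set wv : ℝ → E := fun θ => Real.cos θ • d + Real.sin θ • d₂ with hwv
  have hwvdef : ∀ θ, wv θ = Real.cos θ • d + Real.sin θ • d₂ := fun θ => rfl
  have hwinner : ∀ θ φ : ℝ, ⟪wv θ, wv φ⟫ = Real.cos (φ - θ) := by
    intro θ φ
    rw [hwvdef, hwvdef]
    simp only [inner_add_left, inner_add_right, real_inner_smul_left, real_inner_smul_right,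
      hd, hd₂, hdd, hdd']
    rw [Real.cos_sub]
    ring
  have hw1 : ∀ θ, ⟪wv θ, wv θ⟫ = (1:ℝ) := by
    intro θ; rw [hwinner]; simp
  have hwne : ∀ θ, wv θ ≠ 0 := by
    intro θ h
    have h1 := hw1 θ
    rw [h] at h1
    simp at h1
  have hwpi : ∀ θ, wv (θ + π) = -wv θ := by
    intro θ
    rw [hwvdef, hwvdef, Real.cos_add_pi, Real.sin_add_pi]
    module
  set A : Set ℝ := {θ | Nondecr u (wv θ)} with hA
  have hA0 : (0:ℝ) ∈ A := by
    have : wv 0 = d := by rw [hwvdef]; simp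
    simp only [hA, Set.mem_setOf_eq, this]
    exact hmono
  have hAclosed : IsClosed A := by
    have he : A = ⋂ (x : E), ⋂ (t : ℝ), {θ | 0 ≤ t → u x ≤ u (x + t • wv θ)} := by
      ext θ
      simp only [hA, Set.mem_setOf_eq, Set.mem_iInter, Nondecr]
    rw [he]
    refine isClosed_iInter fun x => isClosed_iInter fun t => ?_
    by_cases ht : 0 ≤ t
    · have he2 : {θ : ℝ | 0 ≤ t → u x ≤ u (x + t • wv θ)}
          = {θ : ℝ | u x ≤ u (x + t • wv θ)} := by
        ext θ; simp [ht]
      rw [he2]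
      refine isClosed_le continuous_const (hcont.comp ?_)
      rw [hwv]
      fun_prop
    · have he2 : {θ : ℝ | 0 ≤ t → u x ≤ u (x + t • wv θ)} = Set.univ := by
        ext θ; simp [ht]
      rw [he2]
      exact isClosed_univ
  have hopp : ∀ θ, θ ∈ A → θ + π ∈ A → False := by
    intro θ h1 h2
    have h2' : Nondecr u (-wv θ) := by
      have := h2
      simp only [hA, Set.mem_setOf_eq] at this
      rwa [hwpi θ] at this
    have h1' : Nondecr u (wv θ) := h1
    exact hnoconst θ (const_of_nondecr_both h1' h2')
  have htri : ∀ θ, θ ∉ A → θ + π ∉ A → ∃ c, SymAt u (wv θ) c := by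
    intro θ h1 h2
    rcases trichotomy hcont hsep (wv θ) (hwne θ) with h|h|h
    · exact absurd h h1
    · exfalso
      apply h2
      simp only [hA, Set.mem_setOf_eq]
      rwa [hwpi θ]
    · exact h
  have hconv : ∀ θ₁ θ θ₂ : ℝ, θ₁ ∈ A → θ₂ ∈ A → θ₁ < θ → θ < θ₂ → θ₂ - θ₁ < π → θ ∈ A := by
    intro θ₁ θ θ₂ h1 h2 hl1 hl2 hlt
    have hs0 : 0 < Real.sin (θ₂ - θ₁) :=
      Real.sin_pos_of_pos_of_lt_pi (by linarith) hlt
    have hs1 : 0 ≤ Real.sin (θ₂ - θ) :=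
      Real.sin_nonneg_of_nonneg_of_le_pi (by linarith) (by linarith)
    have hs2 : 0 ≤ Real.sin (θ - θ₁) :=
      Real.sin_nonneg_of_nonneg_of_le_pi (by linarith) (by linarith)
    have hcomb : Real.sin (θ₂ - θ₁) • wv θ
        = Real.sin (θ₂ - θ) • wv θ₁ + Real.sin (θ - θ₁) • wv θ₂ := by
      rw [hwvdef, hwvdef, hwvdef]
      simp only [smul_add, smul_smul]
      match_scalars <;>
      · simp only [Real.sin_sub]
        ring
    have hnd : Nondecr u (Real.sin (θ₂ - θ) • wv θ₁ + Real.sin (θ - θ₁) • wv θ₂) :=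
      nondecr_add (nondecr_smul hs1 h1) (nondecr_smul hs2 h2)
    rw [← hcomb] at hnd
    exact nondecr_of_smul_pos hs0 hnd
  -- reflection of directions across a symmetric direction
  have hreflvec : ∀ ψ θ : ℝ, wv θ - (2*⟪wv ψ, wv θ⟫) • wv ψ = wv (2*ψ + π - θ) := by
    intro ψ θ
    rw [hwinner]
    rw [hwvdef, hwvdef, hwvdef]
    simp only [smul_add, smul_smul]
    match_scalars
    · simp only [Real.cos_sub, Real.sin_sub, Real.cos_add, Real.sin_add, Real.cos_two_mul,
        Real.sin_two_mul, Real.cos_pi, Real.sin_pi]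
      ring
    · simp only [Real.cos_sub, Real.sin_sub, Real.cos_add, Real.sin_add, Real.cos_two_mul,
        Real.sin_two_mul, Real.cos_pi, Real.sin_pi]
      linear_combination (-2*Real.sin θ) * Real.sin_sq_add_cos_sq ψ
  have hreflA : ∀ ψ θ : ℝ, (∃ c, SymAt u (wv ψ) c) → θ ∈ A → (2*ψ + π - θ) ∈ A := by
    intro ψ θ ⟨c, hsym⟩ hθ
    have h := nondecr_reflect (hw1 ψ) hsym (hθ : Nondecr u (wv θ))
    simp only [hA, Set.mem_setOf_eq]
    rwa [hreflvec ψ θ] at h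
  -- sup and inf of the arc
  have hcpt1 : IsCompact (A ∩ Set.Icc 0 π) := (isCompact_Icc).inter_left hAclosed
  have hne1 : (A ∩ Set.Icc 0 π).Nonempty :=
    ⟨0, hA0, Set.mem_Icc.mpr ⟨le_refl 0, Real.pi_pos.le⟩⟩
  have hcpt2 : IsCompact (A ∩ Set.Icc (-π) 0) := (isCompact_Icc).inter_left hAclosed
  have hne2 : (A ∩ Set.Icc (-π) 0).Nonempty :=
    ⟨0, hA0, Set.mem_Icc.mpr ⟨by linarith [Real.pi_pos], le_refl 0⟩⟩
  set β := sSup (A ∩ Set.Icc 0 π) with hβ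
  set α := sInf (A ∩ Set.Icc (-π) 0) with hα
  have hβmem : β ∈ A ∩ Set.Icc 0 π := hcpt1.sSup_mem hne1
  have hαmem : α ∈ A ∩ Set.Icc (-π) 0 := hcpt2.sInf_mem hne2
  have hβA : β ∈ A := hβmem.1
  have hαA : α ∈ A := hαmem.1
  have hβ0 : 0 ≤ β := hβmem.2.1
  have hβπ : β ≤ π := hβmem.2.2
  have hαπ : -π ≤ α := hαmem.2.1
  have hα0 : α ≤ 0 := hαmem.2.2
  have hβlt : β < π := by
    rcases lt_or_eq_of_le hβπ with h|h
    · exact h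
    · exfalso
      apply hopp 0 hA0
      rw [zero_add, ← h]
      exact hβA
  have hαgt : -π < α := by
    rcases lt_or_eq_of_le hαπ with h|h
    · linarith
    · exfalso
      apply hopp (-π) (by rw [h]; exact hαA)
      have : -π + π = (0:ℝ) := by ring
      rw [this]
      exact hA0
  have hbddA : BddAbove (A ∩ Set.Icc 0 π) :=
    BddAbove.mono Set.inter_subset_right bddAbove_Icc
  have hbddB : BddBelow (A ∩ Set.Icc (-π) 0) :=
    BddBelow.mono Set.inter_subset_right bddBelow_Icc
  have hnotA1 : ∀ ψ, β < ψ → ψ ≤ π → ψ ∉ A := by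
    intro ψ h1 h2 hmem
    have : ψ ≤ β := le_csSup hbddA ⟨hmem, by constructor <;> linarith⟩
    linarith
  have hnotA2 : ∀ ψ, -π ≤ ψ → ψ < α → ψ ∉ A := by
    intro ψ h1 h2 hmem
    have : α ≤ ψ := csInf_le hbddB ⟨hmem, by constructor <;> linarith⟩
    linarith
  by_cases hcase : α + π ≤ β
  · -- [0,β] ⊆ A gives an opposite pair (α, α + π)
    have hsub : α + π ∈ A := by
      rcases eq_or_lt_of_le (show (0:ℝ) ≤ α + π by linarith) with h0|h0
      · rw [← h0]; exact hA0
      · rcases eq_or_lt_of_le hcase with he|hlt'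
        · rw [he]; exact hβA
        · obtain ⟨b, hbmem, hblt⟩ := exists_lt_of_lt_csSup hne1 (show α + π < β from hlt')
          have hbA : b ∈ A := hbmem.1
          have hbne : b ≠ π := by
            intro hbe
            apply hopp 0 hA0
            rw [zero_add, ← hbe]
            exact hbA
          exact hconv 0 (α + π) b hA0 hbA h0 hblt
            (by have := hbmem.2.2; rcases lt_or_eq_of_le this with h|h; linarith; exact absurd h hbne)
    exact hopp α hαA (by exact hsub)
  · push_neg at hcase
    -- every ψ in the gap (β, α+π) gives a symmetric direction wv (ψ - π)
    have hgap : ∀ ψ, β < ψ → ψ < α + π → (2*ψ - π - α) ∈ A := by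
      intro ψ h1 h2
      have hψπ : ψ < π := by linarith
      have hψ0 : 0 < ψ := by linarith
      have hsym : ∃ c, SymAt u (wv (ψ - π)) c := by
        apply htri
        · exact hnotA2 (ψ - π) (by linarith) (by linarith)
        · have he : ψ - π + π = ψ := by ring
          rw [he]
          exact hnotA1 ψ h1 (le_of_lt hψπ)
      have h := hreflA (ψ - π) α hsym hαA
      have he : 2*(ψ - π) + π - α = 2*ψ - π - α := by ring
      rwa [he] at h
    -- sequence in the gap approaching α + π
    have hαπA : α + π ∈ A := by
      set L : ℝ := α + π - β with hL
      have hLpos : 0 < L := by rw [hL]; linarith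
      have hmem : ∀ n : ℕ, (α + π - 2*(L/(2*((n:ℝ)+1)))) ∈ A := by
        intro n
        have hn1 : (0:ℝ) < (n:ℝ) + 1 := by positivity
        have hεpos : 0 < L/(2*((n:ℝ)+1)) := by positivity
        have hεle : L/(2*((n:ℝ)+1)) ≤ L/2 := by
          apply div_le_div_of_nonneg_left (le_of_lt hLpos) (by norm_num) ?_
          · nlinarith
        have h := hgap (α + π - L/(2*((n:ℝ)+1))) (by rw [hL] at hεle ⊢; linarith) (by linarith)
        have he : 2*(α + π - L/(2*((n:ℝ)+1))) - π - α = α + π - 2*(L/(2*((n:ℝ)+1))) := by ring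
        rwa [he] at h
      have htend : Filter.Tendsto (fun n : ℕ => α + π - 2*(L/(2*((n:ℝ)+1))))
          Filter.atTop (nhds (α + π)) := by
        have h1 : Filter.Tendsto (fun n : ℕ => 1/((n:ℝ)+1)) Filter.atTop (nhds 0) :=
          tendsto_one_div_add_atTop_nhds_zero_nat
        have h2 : Filter.Tendsto (fun n : ℕ => α + π - L*(1/((n:ℝ)+1)))
            Filter.atTop (nhds (α + π - L*0)) :=
          Filter.Tendsto.sub tendsto_const_nhds (Filter.Tendsto.const_mul L h1)
        rw [mul_zero, sub_zero] at h2
        refine h2.congr fun n => ?_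
        have hne : ((n:ℝ)+1) ≠ 0 := by positivity
        field_simp
      exact hAclosed.mem_of_tendsto htend (Filter.Eventually.of_forall hmem)
    have : α + π ≤ β := le_csSup hbddA ⟨hαπA, by constructor <;> linarith⟩
    linarith

end Planar


section Endgame

lemma inner_self_pos' {a : E} (ha : a ≠ 0) : (0:ℝ) < ⟪a,a⟫ := by
  have h : 0 < ‖a‖ := norm_pos_iff.mpr ha
  rw [real_inner_self_eq_norm_sq]; positivity

lemma isSymAxis_of_Q {n : E} (hQ : ∀ y z : E, ⟪n,y⟫ = ⟪n,z⟫ → u y = u z) (x : E) :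
    IsSymAxis u x n := by
  intro q y z _ hy hz _
  apply hQ
  rw [inner_sub_right] at hy hz
  linarith

theorem axis_unique {n : E} (hn : n ≠ 0) (hmono : Nondecr u n)
    (hQ : ∀ y z : E, ⟪n,y⟫ = ⟪n,z⟫ → u y = u z)
    (hnonconst : ∃ y z : E, u y ≠ u z)
    (p d' : E) (hd' : d' ≠ 0) (hax : IsSymAxis u p d') : ∃ t : ℝ, d' = t • n := by
  by_contra hcon
  push_neg at hcon
  have hDpos : (0:ℝ) < ⟪d',d'⟫ := inner_self_pos' hd'
  have hDne : (⟪d',d'⟫:ℝ) ≠ 0 := ne_of_gt hDpos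
  have hNpos : (0:ℝ) < ⟪n,n⟫ := inner_self_pos' hn
  have hNne : (⟪n,n⟫:ℝ) ≠ 0 := ne_of_gt hNpos
  set w : E := n - (⟪d',n⟫/⟪d',d'⟫) • d' with hw
  have hdw : ⟪d', w⟫ = (0:ℝ) := by
    rw [hw, inner_sub_right, real_inner_smul_right]
    field_simp; ring
  have hwne : w ≠ 0 := by
    intro h
    rw [hw, sub_eq_zero] at h
    set c : ℝ := ⟪d',n⟫/⟪d',d'⟫ with hcdef
    have hcne : c ≠ (0:ℝ) := by
      intro h0
      rw [h0, zero_smul] at h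
      exact hn h
    apply hcon c⁻¹
    rw [h, smul_smul, inv_mul_cancel₀ hcne, one_smul]
  have hκ : ⟪n, w⟫ = ⟪w,w⟫ := by
    have hc : ⟪n,w⟫ = ⟪w,w⟫ + (⟪d',n⟫/⟪d',d'⟫)*⟪d',w⟫ := by
      nth_rewrite 1 [hw]
      rw [inner_sub_left, real_inner_smul_left]
      ring
    rw [hc, hdw, mul_zero, add_zero]
  have hκpos : (0:ℝ) < ⟪n,w⟫ := by rw [hκ]; exact inner_self_pos' hwne
  have hκne : (⟪n,w⟫:ℝ) ≠ 0 := ne_of_gt hκpos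
  have hkey : ∀ t r : ℝ, u (p + t • d' + r • w) = u (p + t • d' - r • w) := by
    intro t r
    apply hax (p + t • d') (p + t • d' + r • w) (p + t • d' - r • w) ⟨t, rfl⟩
    · rw [add_sub_cancel_left, real_inner_smul_right, hdw, mul_zero]
    · have he : p + t • d' - r • w - (p + t • d') = -(r • w) := by abel
      rw [he, inner_neg_right, real_inner_smul_right, hdw, mul_zero, neg_zero]
    · rw [add_sub_cancel_left]
      have he : p + t • d' - r • w - (p + t • d') = -(r • w) := by abel
      rw [he, norm_neg]
  set f : ℝ → ℝ := fun s => u ((s/⟪n,n⟫) • n) with hf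
  have hfy : ∀ y : E, u y = f ⟪n,y⟫ := by
    intro y
    apply hQ
    rw [real_inner_smul_right]
    field_simp
  have hfmono : ∀ s s' : ℝ, s ≤ s' → f s ≤ f s' := by
    intro s s' h
    have hm := hmono ((s/⟪n,n⟫) • n) ((s'-s)/⟪n,n⟫) (div_nonneg (by linarith) (le_of_lt hNpos))
    have he : (s/⟪n,n⟫) • n + ((s'-s)/⟪n,n⟫) • n = (s'/⟪n,n⟫) • n := by
      rw [← add_smul]
      congr 1
      field_simp; ring
    rwa [he] at hm
  have hrel : ∀ t r : ℝ, f (⟪n,p⟫ + t*⟪n,d'⟫ + r*⟪n,w⟫) = f (⟪n,p⟫ + t*⟪n,d'⟫ - r*⟪n,w⟫) := by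
    intro t r
    have h := hkey t r
    rw [hfy (p + t • d' + r • w), hfy (p + t • d' - r • w)] at h
    have h1 : ⟪n, p + t • d' + r • w⟫ = ⟪n,p⟫ + t*⟪n,d'⟫ + r*⟪n,w⟫ := by
      simp [inner_add_right, real_inner_smul_right]
    have h2 : ⟪n, p + t • d' - r • w⟫ = ⟪n,p⟫ + t*⟪n,d'⟫ - r*⟪n,w⟫ := by
      simp [inner_add_right, inner_sub_right, real_inner_smul_right]
    rw [h1, h2] at h
    exact h
  obtain ⟨y0, z0, hne0⟩ := hnonconst
  by_cases hα : (⟪n,d'⟫:ℝ) = 0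
  · have hsy : ∀ s : ℝ, f (⟪n,p⟫ + s) = f (⟪n,p⟫ - s) := by
      intro s
      have h := hrel 0 (s/⟪n,w⟫)
      rw [hα] at h
      have he : (0:ℝ)*0 = 0 := by ring
      have he1 : ⟪n,p⟫ + 0*(0:ℝ) + (s/⟪n,w⟫)*⟪n,w⟫ = ⟪n,p⟫ + s := by field_simp; ring
      have he2 : ⟪n,p⟫ + 0*(0:ℝ) - (s/⟪n,w⟫)*⟪n,w⟫ = ⟪n,p⟫ - s := by field_simp; ring
      rw [he1, he2] at h
      exact h
    have hconst : ∀ s : ℝ, f s = f ⟪n,p⟫ := by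
      intro s
      rcases le_total s ⟪n,p⟫ with h|h
      · have h1 := hsy (⟪n,p⟫ - s)
        have he1 : ⟪n,p⟫ + (⟪n,p⟫ - s) = 2*⟪n,p⟫ - s := by ring
        have he2 : ⟪n,p⟫ - (⟪n,p⟫ - s) = s := by ring
        rw [he1, he2] at h1
        have h2 := hfmono s ⟪n,p⟫ h
        have h3 := hfmono ⟪n,p⟫ (2*⟪n,p⟫ - s) (by linarith)
        linarith
      · have h1 := hsy (s - ⟪n,p⟫)
        have he1 : ⟪n,p⟫ + (s - ⟪n,p⟫) = s := by ring
        have he2 : ⟪n,p⟫ - (s - ⟪n,p⟫) = 2*⟪n,p⟫ - s := by ring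
        rw [he1, he2] at h1
        have h2 := hfmono ⟪n,p⟫ s h
        have h3 := hfmono (2*⟪n,p⟫ - s) ⟪n,p⟫ (by linarith)
        linarith
    exact hne0 (by rw [hfy y0, hfy z0, hconst ⟪n,y0⟫, hconst ⟪n,z0⟫])
  · have hconst : ∀ s1 s2 : ℝ, f s1 = f s2 := by
      intro s1 s2
      have h := hrel ((s1+s2-2*⟪n,p⟫)/(2*⟪n,d'⟫)) ((s1-s2)/(2*⟪n,w⟫))
      have e1 : ⟪n,p⟫ + ((s1+s2-2*⟪n,p⟫)/(2*⟪n,d'⟫))*⟪n,d'⟫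
          + ((s1-s2)/(2*⟪n,w⟫))*⟪n,w⟫ = s1 := by
        field_simp
        ring
      have e2 : ⟪n,p⟫ + ((s1+s2-2*⟪n,p⟫)/(2*⟪n,d'⟫))*⟪n,d'⟫
          - ((s1-s2)/(2*⟪n,w⟫))*⟪n,w⟫ = s2 := by
        field_simp
        ring
      rw [e1, e2] at h
      exact h
    exact hne0 (by rw [hfy y0, hfy z0, hconst ⟪n,y0⟫ ⟪n,z0⟫])

end Endgame

lemma symAt_neg {a : E} {c : ℝ} (h : SymAt u a c) : SymAt u (-a) (-c) := by
  intro x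
  have he : reflectHyp (-a) (-c) x = reflectHyp a c x := by
    simp only [reflectHyp, inner_neg_left, inner_neg_right, smul_neg, neg_smul, neg_neg,
      sub_neg_eq_add]
    match_scalars <;> ring
  rw [he]
  exact h x

lemma symAt_smul {e : E} (he : ⟪e,e⟫ = (1:ℝ)) {c : ℝ} {s : ℝ} (hs : s ≠ 0)
    (h : SymAt u e c) : SymAt u (s • e) (s * c) := by
  intro x
  have heq : reflectHyp (s • e) (s * c) x = reflectHyp e c x := by
    simp only [reflectHyp, real_inner_smul_left, real_inner_smul_right, he, mul_one, smul_smul]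
    match_scalars <;> field_simp [hs] <;> ring
  rw [heq]
  exact h x

lemma exists_angle (a b : ℝ) (h : a^2 + b^2 = 1) :
    ∃ φ : ℝ, Real.cos φ = a ∧ Real.sin φ = b := by
  have habs : ‖(a + b * Complex.I : ℂ)‖ = 1 := by
    rw [Complex.norm_def, Complex.normSq_add_mul_I, h, Real.sqrt_one]
  have hne : (a + b * Complex.I) ≠ 0 := by
    intro h0
    rw [h0] at habs
    simp at habs
  refine ⟨Complex.arg (a + b * Complex.I), ?_, ?_⟩
  · have h1 := Complex.cos_arg hne
    rw [habs] at h1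
    simpa using h1
  · have h2 := Complex.sin_arg (↑a + ↑b * Complex.I)
    rw [habs] at h2
    simpa using h2

section Main

open Real

variable [FiniteDimensional ℝ E]

set_option maxHeartbeats 1000000 in
lemma rank_ge2_false (hcont : Continuous u) (hsep : Separable u)
    (hnotrad : ∀ x : E, ∃ y z : E, ‖y - x‖ = ‖z - x‖ ∧ u y ≠ u z)
    (hW2 : 2 ≤ Module.finrank ℝ ((constSpace u)ᗮ : Submodule ℝ E)) : False := by
  classical
  set V : Submodule ℝ E := constSpace u with hV
  set W : Submodule ℝ E := Vᗮ with hW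
  have hWV : Wᗮ = V := Submodule.orthogonal_orthogonal V
  have hVWtriv : ∀ w : E, w ∈ W → ConstDir u w → w = 0 := by
    intro w hwW hwC
    have hwV : w ∈ V := hwC
    exact (Submodule.disjoint_def.mp (Submodule.orthogonal_disjoint V)) w hwV hwW
  have hWne : ∀ e : E, e ∈ W → ⟪e,e⟫ = (1:ℝ) → e ≠ 0 := by
    intro e _ he h0
    rw [h0] at he
    simp at he
  have hpartner : ∀ e : E, e ∈ W → ⟪e,e⟫ = (1:ℝ) →
      ∃ m : E, m ∈ W ∧ ⟪m,m⟫ = (1:ℝ) ∧ ⟪e,m⟫ = (0:ℝ) := by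
    intro e heW he1
    have he0 : e ≠ 0 := hWne e heW he1
    set S : Submodule ℝ E := Submodule.span ℝ {e} with hS
    have hSrank : Module.finrank ℝ S = 1 := finrank_span_singleton he0
    have hSorth : Module.finrank ℝ S + Module.finrank ℝ Sᗮ = Module.finrank ℝ E :=
      Submodule.finrank_add_finrank_orthogonal (K := S)
    have hsupinf := Submodule.finrank_sup_add_finrank_inf_eq W Sᗮ
    have hsup_le : Module.finrank ℝ ((W ⊔ Sᗮ : Submodule ℝ E)) ≤ Module.finrank ℝ E :=
      Submodule.finrank_le _
    have hWfull : Module.finrank ℝ V + Module.finrank ℝ W = Module.finrank ℝ E := by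
      have h := Submodule.finrank_add_finrank_orthogonal (K := V)
      rw [← hW] at h
      exact h
    have hKrank : 1 ≤ Module.finrank ℝ ((W ⊓ Sᗮ : Submodule ℝ E)) := by omega
    obtain ⟨m₀, hm₀, hm₀0⟩ := Submodule.exists_mem_ne_zero_of_ne_bot
      (show (W ⊓ Sᗮ : Submodule ℝ E) ≠ ⊥ by
        intro hb
        rw [hb] at hKrank
        simp at hKrank)
    refine ⟨‖m₀‖⁻¹ • m₀, ?_, ?_, ?_⟩
    · exact W.smul_mem _ (hm₀.1)
    · rw [real_inner_smul_left, real_inner_smul_right, real_inner_self_eq_norm_sq]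
      have h0 : ‖m₀‖ ≠ 0 := norm_ne_zero_iff.mpr hm₀0
      field_simp
    · rw [real_inner_smul_right]
      have : ⟪e, m₀⟫ = (0:ℝ) := by
        have h := hm₀.2
        exact (Submodule.mem_orthogonal S m₀).mp h e (Submodule.mem_span_singleton_self e)
      rw [this, mul_zero]
  have hnomono : ∀ e : E, e ∈ W → ⟪e,e⟫ = (1:ℝ) → ¬ Nondecr u e := by
    intro e heW he1 hmono
    obtain ⟨m, hmW, hm1, hem⟩ := hpartner e heW he1
    refine planar_no_mono hcont hsep he1 hm1 hem ?_ hmono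
    intro θ hconst
    have hmem : Real.cos θ • e + Real.sin θ • m ∈ W :=
      W.add_mem (W.smul_mem _ heW) (W.smul_mem _ hmW)
    have h0 := hVWtriv _ hmem hconst
    have hme : ⟪m,e⟫ = (0:ℝ) := by rw [real_inner_comm]; exact hem
    have hunit : ⟪Real.cos θ • e + Real.sin θ • m, Real.cos θ • e + Real.sin θ • m⟫ = (1:ℝ) := by
      simp only [inner_add_left, inner_add_right, real_inner_smul_left, real_inner_smul_right,
        he1, hm1, hem, hme]
      linear_combination Real.sin_sq_add_cos_sq θ
    rw [h0] at hunit
    simp at hunit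
  have hsymex : ∀ e : E, e ∈ W → ⟪e,e⟫ = (1:ℝ) → ∃ c, SymAt u e c := by
    intro e heW he1
    rcases trichotomy hcont hsep e (hWne e heW he1) with h|h|h
    · exact absurd h (hnomono e heW he1)
    · exfalso
      exact hnomono (-e) (W.neg_mem heW) (by rw [inner_neg_left, inner_neg_right, neg_neg, he1]) h
    · exact h
  set cf : E → ℝ := fun e => if h : ∃ c, SymAt u e c then h.choose else 0 with hcf
  have hcfsym : ∀ e : E, e ∈ W → ⟪e,e⟫ = (1:ℝ) → SymAt u e (cf e) := by
    intro e heW he1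
    have hex := hsymex e heW he1
    have : cf e = hex.choose := by rw [hcf]; exact dif_pos hex
    rw [this]
    exact hex.choose_spec
  have hcfuniq : ∀ e : E, e ∈ W → ⟪e,e⟫ = (1:ℝ) → ∀ c, SymAt u e c → c = cf e := by
    intro e heW he1 c hc
    by_contra hne
    have hconst : ConstDir u e := by
      rcases lt_trichotomy c (cf e) with h|h|h
      · exact const_of_two_sym hcont hsep (hWne e heW he1) h hc (hcfsym e heW he1)
      · exact absurd h hne
      · exact const_of_two_sym hcont hsep (hWne e heW he1) h (hcfsym e heW he1) hc
    exact (hWne e heW he1) (hVWtriv e heW hconst)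
  have hcfneg : ∀ e : E, e ∈ W → ⟪e,e⟫ = (1:ℝ) → cf (-e) = - cf e := by
    intro e heW he1
    have h1 : SymAt u (-e) (-(cf e)) := symAt_neg (hcfsym e heW he1)
    have h2 := hcfuniq (-e) (W.neg_mem heW) (by rw [inner_neg_left, inner_neg_right, neg_neg, he1]) (-(cf e)) h1
    linarith [h2]
  have hstar : ∀ e w : E, e ∈ W → w ∈ W → ⟪e,e⟫ = (1:ℝ) → ⟪w,w⟫ = (1:ℝ) →
      cf (w - (2*⟪e,w⟫) • e) = cf w - 2*⟪w,e⟫*(cf e) := by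
    intro e w heW hwW he1 hw1
    have h1 : SymAt u (w - (2*⟪e,w⟫) • e) (cf w - 2*⟪w,e⟫*(cf e)) :=
      symAt_reflect he1 hw1 (hcfsym e heW he1) (hcfsym w hwW hw1)
    have hmem : w - (2*⟪e,w⟫) • e ∈ W := W.sub_mem hwW (W.smul_mem _ heW)
    have hunit := reflected_dir_inner he1 hw1
    exact (hcfuniq _ hmem hunit _ h1).symm
  have hplanar : ∀ w m : E, w ∈ W → m ∈ W → ⟪w,w⟫ = (1:ℝ) → ⟪m,m⟫ = (1:ℝ) →
      ⟪w,m⟫ = (0:ℝ) → ∀ φ : ℝ, cf (Real.cos φ • w + Real.sin φ • m)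
        = Real.cos φ * cf w + Real.sin φ * cf m := by
    intro w m hwW hmW hw1 hm1 hwm
    have hmw : ⟪m,w⟫ = (0:ℝ) := by rw [real_inner_comm]; exact hwm
    set wv : ℝ → E := fun θ => Real.cos θ • w + Real.sin θ • m with hwv
    have hwvdef : ∀ θ, wv θ = Real.cos θ • w + Real.sin θ • m := fun θ => rfl
    have hwvW : ∀ θ, wv θ ∈ W := fun θ => W.add_mem (W.smul_mem _ hwW) (W.smul_mem _ hmW)
    have hwinner : ∀ θ φ : ℝ, ⟪wv θ, wv φ⟫ = Real.cos (φ - θ) := by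
      intro θ φ
      rw [hwvdef, hwvdef]
      simp only [inner_add_left, inner_add_right, real_inner_smul_left, real_inner_smul_right,
        hw1, hm1, hwm, hmw]
      rw [Real.cos_sub]
      ring
    have hw1' : ∀ θ, ⟪wv θ, wv θ⟫ = (1:ℝ) := by
      intro θ; rw [hwinner]; simp
    have hwpi : ∀ θ, wv (θ + π) = -wv θ := by
      intro θ
      rw [hwvdef, hwvdef, Real.cos_add_pi, Real.sin_add_pi]
      module
    have hreflvec : ∀ ψ θ : ℝ, wv θ - (2*Real.cos (θ - ψ)) • wv ψ = wv (2*ψ + π - θ) := by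
      intro ψ θ
      rw [hwvdef, hwvdef, hwvdef]
      simp only [smul_add, smul_smul]
      match_scalars
      · simp only [Real.cos_sub, Real.sin_sub, Real.cos_add, Real.sin_add, Real.cos_two_mul,
          Real.sin_two_mul, Real.cos_pi, Real.sin_pi]
        ring
      · simp only [Real.cos_sub, Real.sin_sub, Real.cos_add, Real.sin_add, Real.cos_two_mul,
          Real.sin_two_mul, Real.cos_pi, Real.sin_pi]
        linear_combination (-2*Real.sin θ) * Real.sin_sq_add_cos_sq ψ
    have hFE : ∀ ψ θ : ℝ, cf (wv (2*ψ + π - θ))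
        = cf (wv θ) - 2*Real.cos (θ - ψ) * cf (wv ψ) := by
      intro ψ θ
      have h := hstar (wv ψ) (wv θ) (hwvW ψ) (hwvW θ) (hw1' ψ) (hw1' θ)
      rw [hwinner ψ θ, hwinner θ ψ, show ψ - θ = -(θ - ψ) by ring, Real.cos_neg] at h
      rw [hreflvec ψ θ] at h
      exact h
    set D : ℝ → ℝ := fun θ => cf (wv θ) - (Real.cos θ * cf w + Real.sin θ * cf m) with hD
    have hDdef : ∀ θ, D θ = cf (wv θ) - (Real.cos θ * cf w + Real.sin θ * cf m) :=
      fun θ => rfl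
    have hD0 : D 0 = 0 := by
      rw [hDdef]
      have : wv 0 = w := by rw [hwvdef]; simp
      rw [this]
      simp
    have hDhalf : D (π/2) = 0 := by
      rw [hDdef]
      have : wv (π/2) = m := by rw [hwvdef]; simp
      rw [this]
      simp
    have hDpi : ∀ θ, D (θ + π) = - D θ := by
      intro θ
      rw [hDdef, hDdef, hwpi θ, hcfneg (wv θ) (hwvW θ) (hw1' θ), Real.cos_add_pi,
        Real.sin_add_pi]
      ring
    have trig1 : ∀ ψ θ : ℝ, Real.cos (2*ψ + π - θ) = Real.cos θ - 2*Real.cos (θ-ψ)*Real.cos ψ := by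
      intro ψ θ
      simp only [Real.cos_sub, Real.sin_sub, Real.cos_add, Real.sin_add, Real.cos_two_mul,
        Real.sin_two_mul, Real.cos_pi, Real.sin_pi]
      ring
    have trig2 : ∀ ψ θ : ℝ, Real.sin (2*ψ + π - θ) = Real.sin θ - 2*Real.cos (θ-ψ)*Real.sin ψ := by
      intro ψ θ
      simp only [Real.cos_sub, Real.sin_sub, Real.cos_add, Real.sin_add, Real.cos_two_mul,
        Real.sin_two_mul, Real.cos_pi, Real.sin_pi]
      linear_combination (2*Real.sin θ) * Real.sin_sq_add_cos_sq ψ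
    have hDFE : ∀ ψ θ : ℝ, D (2*ψ + π - θ) = D θ - 2*Real.cos (θ - ψ) * D ψ := by
      intro ψ θ
      rw [hDdef, hDdef, hDdef, hFE ψ θ, trig1 ψ θ, trig2 ψ θ]
      ring
    have hDodd : ∀ θ, D (-θ) = - D θ := by
      intro θ
      have h := hDFE 0 θ
      rw [show 2*(0:ℝ) + π - θ = (-θ) + π by ring, hDpi (-θ), sub_zero] at h
      rw [hD0] at h
      linarith [h]
    have hJen : ∀ θ σ : ℝ, D σ + D θ = 2*Real.cos ((θ-σ)/2) * D ((θ+σ)/2) := by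
      intro θ σ
      have h := hDFE ((θ+σ)/2) θ
      rw [show 2*((θ+σ)/2) + π - θ = σ + π by ring, hDpi σ,
        show θ - (θ+σ)/2 = (θ-σ)/2 by ring] at h
      linarith [h]
    have hJ : ∀ x y : ℝ, D (x - y) = Real.cos y * D x - Real.cos x * D y := by
      intro x y
      have h1 := hJen (x+y) (x-y)
      rw [show ((x+y)-(x-y))/2 = y by ring, show ((x+y)+(x-y))/2 = x by ring] at h1
      have h2 := hJen (x+y) (y-x)
      rw [show ((x+y)-(y-x))/2 = x by ring, show ((x+y)+(y-x))/2 = y by ring] at h2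
      have h3 : D (y - x) = - D (x - y) := by
        rw [show y - x = -(x-y) by ring, hDodd]
      rw [h3] at h2
      linarith [h1, h2]
    have hDzero : ∀ θ, D θ = 0 := by
      intro θ
      have h := hJ (π/2) (π/2 - θ)
      rw [show π/2 - (π/2 - θ) = θ by ring, hDhalf, Real.cos_pi_div_two] at h
      simpa using h
    intro φ
    have h := hDzero φ
    rw [hDdef] at h
    have : cf (wv φ) = Real.cos φ * cf w + Real.sin φ * cf m := by linarith [h]
    rw [hwvdef] at this
    exact this
  -- the homogeneous extension of cf
  set L : E → ℝ := fun p => if p = 0 then 0 else ‖p‖ * cf (‖p‖⁻¹ • p) with hL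
  have hLdef : ∀ p : E, L p = if p = 0 then 0 else ‖p‖ * cf (‖p‖⁻¹ • p) := fun _ => rfl
  have hL0 : L 0 = 0 := by rw [hLdef, if_pos rfl]
  have hunit_smul : ∀ p : E, p ≠ 0 → ⟪‖p‖⁻¹ • p, ‖p‖⁻¹ • p⟫ = (1:ℝ) := by
    intro p hp
    rw [real_inner_smul_left, real_inner_smul_right, real_inner_self_eq_norm_sq]
    have h0 : ‖p‖ ≠ 0 := norm_ne_zero_iff.mpr hp
    field_simp
  have hLunit : ∀ e : E, ⟪e,e⟫ = (1:ℝ) → L e = cf e := by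
    intro e he1
    have he0 : e ≠ 0 := by intro hh; rw [hh] at he1; simp at he1
    have hn1 : ‖e‖ = 1 := by
      have h2 : ‖e‖^2 = 1 := by rw [← real_inner_self_eq_norm_sq]; exact he1
      nlinarith [norm_nonneg e]
    rw [hLdef, if_neg he0, hn1, inv_one, one_smul, one_mul]
  have hLsmulW : ∀ (t : ℝ) (p : E), p ∈ W → L (t • p) = t * L p := by
    intro t p hpW
    by_cases hp : p = 0
    · rw [hp, smul_zero, hL0, mul_zero]
    by_cases ht : t = 0
    · rw [ht, zero_smul, hL0, zero_mul]
    have htp : t • p ≠ 0 := smul_ne_zero ht hp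
    have hnp : ‖p‖ ≠ 0 := norm_ne_zero_iff.mpr hp
    have hnorm : ‖t • p‖ = |t| * ‖p‖ := by rw [norm_smul, Real.norm_eq_abs]
    rcases lt_or_gt_of_ne ht with hneg|hpos
    · have habs : |t| = -t := abs_of_neg hneg
      have hvec : ‖t • p‖⁻¹ • (t • p) = -(‖p‖⁻¹ • p) := by
        rw [hnorm, habs, smul_smul]
        have : ((-t) * ‖p‖)⁻¹ * t = -(‖p‖⁻¹) := by
          field_simp
        rw [this, neg_smul]
      rw [hLdef (t • p), if_neg htp, hvec, hnorm, habs,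
        hcfneg (‖p‖⁻¹ • p) (W.smul_mem _ hpW) (hunit_smul p hp), hLdef p, if_neg hp]
      ring
    · have habs : |t| = t := abs_of_pos hpos
      have hvec : ‖t • p‖⁻¹ • (t • p) = ‖p‖⁻¹ • p := by
        rw [hnorm, habs, smul_smul]
        have : (t * ‖p‖)⁻¹ * t = ‖p‖⁻¹ := by field_simp
        rw [this]
      rw [hLdef (t • p), if_neg htp, hvec, hnorm, habs, hLdef p, if_neg hp]
      ring
  have hLplane : ∀ w m : E, w ∈ W → m ∈ W → ⟪w,w⟫ = (1:ℝ) → ⟪m,m⟫ = (1:ℝ) →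
      ⟪w,m⟫ = (0:ℝ) → ∀ a b : ℝ, L (a • w + b • m) = a * cf w + b * cf m := by
    intro w m hwW hmW hw1 hm1 hwm a b
    have hmw : ⟪m,w⟫ = (0:ℝ) := by rw [real_inner_comm]; exact hwm
    by_cases hz : a • w + b • m = 0
    · have ha : a = 0 := by
        have h := congrArg (fun x : E => (⟪w, x⟫ : ℝ)) hz
        simp only [inner_add_right, real_inner_smul_right, hw1, hwm, inner_zero_right, mul_one, mul_zero, add_zero, zero_add] at h; exact h
      have hb : b = 0 := by
        have h := congrArg (fun x : E => (⟪m, x⟫ : ℝ)) hz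
        simp only [inner_add_right, real_inner_smul_right, hm1, hmw, inner_zero_right, mul_one, mul_zero, add_zero, zero_add] at h; exact h
      rw [hz, hL0, ha, hb]
      ring
    · set p : E := a • w + b • m with hpdef
      have hr2 : ‖p‖^2 = a^2 + b^2 := by
        rw [← real_inner_self_eq_norm_sq, hpdef]
        simp only [inner_add_left, inner_add_right, real_inner_smul_left, real_inner_smul_right,
          hw1, hm1, hwm, hmw]
        ring
      have hrpos : 0 < ‖p‖ := norm_pos_iff.mpr hz
      have hrne : ‖p‖ ≠ 0 := ne_of_gt hrpos
      obtain ⟨φ, hcos, hsin⟩ := exists_angle (a/‖p‖) (b/‖p‖) (by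
        field_simp
        linarith [hr2])
      have hunitv : ‖p‖⁻¹ • p = Real.cos φ • w + Real.sin φ • m := by
        rw [hpdef, smul_add, smul_smul, smul_smul]
        rw [show ‖p‖⁻¹ * a = Real.cos φ from by rw [hcos]; ring,
          show ‖p‖⁻¹ * b = Real.sin φ from by rw [hsin]; ring]
      rw [hLdef, if_neg hz]
      rw [show ‖a • w + b • m‖⁻¹ • (a • w + b • m) = Real.cos φ • w + Real.sin φ • m
        from hunitv]
      rw [hplanar w m hwW hmW hw1 hm1 hwm φ, hcos, hsin]
      field_simp
  have hLadd : ∀ p q : E, p ∈ W → q ∈ W → L (p + q) = L p + L q := by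
    intro p q hpW hqW
    by_cases hp : p = 0
    · rw [hp, zero_add, hL0, zero_add]
    by_cases hq : q = 0
    · rw [hq, add_zero, hL0, add_zero]
    set w : E := ‖p‖⁻¹ • p with hwdef
    have hnp : ‖p‖ ≠ 0 := norm_ne_zero_iff.mpr hp
    have hwW : w ∈ W := W.smul_mem _ hpW
    have hw1 : ⟪w,w⟫ = (1:ℝ) := hunit_smul p hp
    have hpw : p = ‖p‖ • w := by
      rw [hwdef, smul_smul, mul_inv_cancel₀ hnp, one_smul]
    set m₀ : E := q - ⟪w, q⟫ • w with hm₀def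
    have hm₀W : m₀ ∈ W := W.sub_mem hqW (W.smul_mem _ hwW)
    have hwm₀ : ⟪w, m₀⟫ = (0:ℝ) := by
      rw [hm₀def, inner_sub_right, real_inner_smul_right, hw1]
      ring
    by_cases hm₀z : m₀ = 0
    · -- collinear case
      have hqw : q = ⟪w, q⟫ • w := by
        have := sub_eq_zero.mp (hm₀def ▸ hm₀z)
        exact this
      have hsum : p + q = (‖p‖ + ⟪w,q⟫) • w := by
        rw [add_smul, ← hpw, ← hqw]
      have hLp : L p = ‖p‖ * cf w := by
        nth_rewrite 1 [hpw]
        rw [hLsmulW _ _ hwW, hLunit w hw1]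
      have hLq : L q = ⟪w,q⟫ * cf w := by
        nth_rewrite 1 [hqw]
        rw [hLsmulW _ _ hwW, hLunit w hw1]
      rw [hsum, hLsmulW _ _ hwW, hLunit w hw1, hLp, hLq]
      ring
    · set m : E := ‖m₀‖⁻¹ • m₀ with hmdef
      have hnm₀ : ‖m₀‖ ≠ 0 := norm_ne_zero_iff.mpr hm₀z
      have hmW : m ∈ W := W.smul_mem _ hm₀W
      have hm1 : ⟪m,m⟫ = (1:ℝ) := hunit_smul m₀ hm₀z
      have hwm : ⟪w,m⟫ = (0:ℝ) := by
        rw [hmdef, real_inner_smul_right, hwm₀, mul_zero]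
      have hm_scale : ‖m₀‖ • m = m₀ := by
        rw [hmdef, smul_smul, mul_inv_cancel₀ hnm₀, one_smul]
      have hqexp : q = ⟪w,q⟫ • w + ‖m₀‖ • m := by
        rw [hm_scale, hm₀def]
        abel
      have hsum : p + q = (‖p‖ + ⟪w,q⟫) • w + ‖m₀‖ • m := by
        rw [add_smul]
        nth_rewrite 1 [hpw]
        nth_rewrite 1 [hqexp]
        abel
      have hLp : L p = ‖p‖ * cf w := by
        nth_rewrite 1 [hpw]
        rw [hLsmulW _ _ hwW, hLunit w hw1]
      have hLq : L q = ⟪w,q⟫ * cf w + ‖m₀‖ * cf m := by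
        nth_rewrite 1 [hqexp]
        rw [hLplane w m hwW hmW hw1 hm1 hwm]
      rw [hsum, hLplane w m hwW hmW hw1 hm1 hwm, hLp, hLq]
      ring
  -- Riesz representation of the offsets : the common centre z
  have hex_z : ∃ z : E, ∀ p : E, p ∈ W → L p = ⟪z, p⟫ := by
    have hlin : IsLinearMap ℝ (fun p : E => L ↑(W.orthogonalProjectionOnto p)) := by
      constructor
      · intro p q
        rw [map_add]
        exact hLadd _ _ (Submodule.coe_mem _) (Submodule.coe_mem _)
      · intro t p
        rw [map_smul]
        have := hLsmulW t ↑(W.orthogonalProjectionOnto p) (Submodule.coe_mem _)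
        simpa using this
    set ℓ : E →ₗ[ℝ] ℝ := IsLinearMap.mk' _ hlin with hℓ
    set ℓ' : E →L[ℝ] ℝ := LinearMap.toContinuousLinearMap ℓ with hℓ'
    refine ⟨(InnerProductSpace.toDual ℝ E).symm ℓ', ?_⟩
    intro p hpW
    have h := InnerProductSpace.toDual_symm_apply (𝕜 := ℝ) (E := E) (x := p) (y := ℓ')
    rw [h]
    show L p = L ↑(W.orthogonalProjectionOnto p)
    rw [← Submodule.starProjection_apply, Submodule.starProjection_eq_self_iff.mpr hpW]
  obtain ⟨z, hz⟩ := hex_z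
  have hsymz : ∀ e : E, e ∈ W → e ≠ 0 → SymAt u e ⟪e, z⟫ := by
    intro e heW he0
    have hne : ‖e‖ ≠ 0 := norm_ne_zero_iff.mpr he0
    have hu := hcfsym (‖e‖⁻¹ • e) (W.smul_mem _ heW) (hunit_smul e he0)
    have hs := symAt_smul (hunit_smul e he0) (s := ‖e‖) hne hu
    rw [smul_smul, mul_inv_cancel₀ hne, one_smul] at hs
    have hval : ‖e‖ * cf (‖e‖⁻¹ • e) = ⟪e,z⟫ := by
      have h1 : L e = ⟪z, e⟫ := hz e heW
      rw [hLdef, if_neg he0] at h1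
      rw [h1, real_inner_comm]
    rwa [hval] at hs
  have hrad : ∀ y₁ y₂ : E, y₁ ∈ W → y₂ ∈ W → ‖y₁ - z‖ = ‖y₂ - z‖ → u y₁ = u y₂ := by
    intro y₁ y₂ h1W h2W hnorm
    by_cases heq : y₁ = y₂
    · rw [heq]
    · set e : E := y₁ - y₂ with hedef
      have heW : e ∈ W := W.sub_mem h1W h2W
      have he0 : e ≠ 0 := sub_ne_zero.mpr heq
      have hkey : ⟪e, y₁ - z⟫ = ⟪e,e⟫/2 := by
        have hnn : ⟪y₁ - z, y₁ - z⟫ = ⟪y₂ - z, y₂ - z⟫ := by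
          rw [real_inner_self_eq_norm_sq, real_inner_self_eq_norm_sq, hnorm]
        have hd : e = (y₁ - z) - (y₂ - z) := by rw [hedef]; abel
        rw [hd]
        simp only [inner_sub_left, inner_sub_right] at hnn ⊢
        linarith [hnn, real_inner_comm y₁ y₂, real_inner_comm y₁ z, real_inner_comm y₂ z,
          real_inner_comm z y₁, real_inner_comm z y₂]
      have hrefl : reflectHyp e ⟪e,z⟫ y₁ = y₂ := by
        rw [reflectHyp]
        rw [inner_sub_right] at hkey
        rw [show (2 * ((⟪e, y₁⟫:ℝ) - ⟪e,z⟫)) = ⟪e,e⟫ from by linarith [hkey]]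
        rw [div_self (inner_self_ne_zero.mpr he0), one_smul, hedef]
        abel
      have h := hsymz e heW he0 y₁
      rw [hrefl] at h
      exact h.symm
  have hproj : ∀ y : E, u y = u ↑(W.orthogonalProjectionOnto y) := by
    intro y
    apply eq_of_sub_mem_constSpace
    have h := Submodule.sub_starProjection_mem_orthogonal (K := W) y
    rw [Submodule.starProjection_apply, hWV] at h
    exact h
  by_cases hVbot : V = ⊥
  · have hWtop : W = ⊤ := by rw [hW, hVbot, Submodule.bot_orthogonal_eq_top]
    obtain ⟨y₁, y₂, hnorm, hne⟩ := hnotrad z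
    exact hne (hrad y₁ y₂ (by rw [hWtop]; trivial) (by rw [hWtop]; trivial) hnorm)
  · obtain ⟨v, hvV, hv0⟩ := Submodule.exists_mem_ne_zero_of_ne_bot hVbot
    have hWne_bot : W ≠ ⊥ := by
      intro hb
      rw [hb] at hW2
      simp at hW2
    obtain ⟨e₀, he₀W, he₀0⟩ := Submodule.exists_mem_ne_zero_of_ne_bot hWne_bot
    obtain ⟨e₁, he₁W, he₁1⟩ : ∃ e₁ : E, e₁ ∈ W ∧ ⟪e₁,e₁⟫ = (1:ℝ) :=
      ⟨‖e₀‖⁻¹ • e₀, W.smul_mem _ he₀W, hunit_smul e₀ he₀0⟩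
    have he₁0 : e₁ ≠ 0 := hWne e₁ he₁W he₁1
    have hnv : ⟪e₁, v⟫ = (0:ℝ) := by
      have h := (Submodule.mem_orthogonal V e₁).mp (hW ▸ he₁W) v hvV
      rw [real_inner_comm]
      exact h
    have hvC : ConstDir u v := hvV
    have hne1v : e₁ + v ≠ 0 := by
      intro hcontra
      have hnn : e₁ = -v := eq_neg_of_add_eq_zero_left hcontra
      have he₁V : e₁ ∈ V := by rw [hnn]; exact V.neg_mem hvV
      exact he₁0 (hVWtriv e₁ he₁W he₁V)
    rcases trichotomy hcont hsep (e₁ + v) hne1v with h|h|h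
    · apply hnomono e₁ he₁W he₁1
      intro x t ht
      have hh := h x t ht
      have he : x + t • (e₁ + v) = (x + t • e₁) + (t • v) := by module
      rw [he] at hh
      have h2 : u ((x + t • e₁) + t • v) = u (x + t • e₁) := hvC (x + t • e₁) t
      rw [h2] at hh
      exact hh
    · apply hnomono (-e₁) (W.neg_mem he₁W) (by rw [inner_neg_left, inner_neg_right, neg_neg, he₁1])
      intro x t ht
      have hh := h x t ht
      have he : x + t • (-(e₁ + v)) = (x + t • (-e₁)) + ((-t) • v) := by module
      rw [he] at hh
      have h2 : u ((x + t • (-e₁)) + (-t) • v) = u (x + t • (-e₁)) := hvC (x + t • (-e₁)) (-t)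
      rw [h2] at hh
      exact hh
    · obtain ⟨c, hsymc⟩ := h
      have hconst : ConstDir u e₁ := by
        intro x s
        have hqpos : (0:ℝ) < ⟪v,v⟫ := inner_self_pos' hv0
        have hDne : (⟪e₁+v,e₁+v⟫:ℝ) ≠ 0 := ne_of_gt (inner_self_pos' hne1v)
        have hvq : ⟪e₁+v, v⟫ = ⟪v,v⟫ := by rw [inner_add_left, hnv, zero_add]
        have key : ∃ r : ℝ, (2*(⟪e₁+v, x + r • v⟫ - c))/⟪e₁+v,e₁+v⟫ = -s := by
          refine ⟨(-s*⟪e₁+v,e₁+v⟫/2 - ⟪e₁+v,x⟫ + c)/⟪v,v⟫, ?_⟩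
          rw [inner_add_right, real_inner_smul_right, hvq]
          field_simp
          ring
        obtain ⟨r, hcoef⟩ := key
        have hh := hsymc (x + r • v)
        rw [reflectHyp, hcoef] at hh
        have he1 : x + r • v - (-s) • (e₁+v) = (x + s • e₁) + (r+s) • v := by module
        rw [he1] at hh
        have h2 : u ((x + s • e₁) + (r+s) • v) = u (x + s • e₁) := hvC (x + s • e₁) (r+s)
        have h3 : u (x + r • v) = u x := hvC x r
        rw [h2, h3] at hh
        exact hh
      exact he₁0 (hVWtriv e₁ he₁W hconst)

theorem main_normal (hcont : Continuous u) (hsep : Separable u)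
    (hdim : 2 ≤ Module.finrank ℝ E)
    (hnotrad : ∀ x : E, ∃ y z : E, ‖y - x‖ = ‖z - x‖ ∧ u y ≠ u z) :
    ∃ n : E, n ≠ 0 ∧ Nondecr u n ∧ (∀ y z : E, ⟪n,y⟫ = ⟪n,z⟫ → u y = u z) := by
  classical
  set V : Submodule ℝ E := constSpace u with hV
  set W : Submodule ℝ E := Vᗮ with hWdef
  have hWV : Wᗮ = V := Submodule.orthogonal_orthogonal V
  have hVWtriv : ∀ w : E, w ∈ W → ConstDir u w → w = 0 := by
    intro w hwW hwC
    have hwV : w ∈ V := hwC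
    have hdisj := Submodule.orthogonal_disjoint V
    exact (Submodule.disjoint_def.mp hdisj) w hwV hwW
  have hmod : ∀ (x v : E), v ∈ V → u (x + v) = u x := by
    intro x v hv
    have h := (mem_constSpace.mp hv) x 1
    rwa [one_smul] at h
  have hnonconst : ∃ y z : E, u y ≠ u z := by
    obtain ⟨y, z, _, h⟩ := hnotrad 0
    exact ⟨y, z, h⟩
  rcases Nat.lt_or_ge (Module.finrank ℝ W) 2 with hlt|hge
  swap
  · exact absurd (rank_ge2_false hcont hsep hnotrad hge) id
  interval_cases h : (Module.finrank ℝ W)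
  · -- rank 0 : u is constant, contradiction
    exfalso
    have hWbot : W = ⊥ := Submodule.finrank_eq_zero.mp h
    have hVtop : V = ⊤ := by
      rw [← Submodule.orthogonal_eq_bot_iff]
      exact hWbot
    obtain ⟨y, z, hne⟩ := hnonconst
    apply hne
    have : y - z ∈ V := by rw [hVtop]; trivial
    exact eq_of_sub_mem_constSpace this
  · -- rank 1 : the main case
    obtain ⟨n, hnW, hn0⟩ := Submodule.exists_mem_ne_zero_of_ne_bot (by
      intro hb
      rw [hb] at h
      simp at h : (W ≠ ⊥))
    have hWspan : (Submodule.span ℝ {n} : Submodule ℝ E) = W := by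
      apply Submodule.eq_of_le_of_finrank_eq
      · rw [Submodule.span_le, Set.singleton_subset_iff]; exact hnW
      · rw [finrank_span_singleton hn0, h]
    have hQ : ∀ y z : E, ⟪n,y⟫ = ⟪n,z⟫ → u y = u z := by
      intro y z hyz
      have hsub : y - z ∈ Wᗮ := by
        intro w hw
        rw [← hWspan] at hw
        obtain ⟨c, hc⟩ := Submodule.mem_span_singleton.mp hw
        rw [← hc, real_inner_smul_left, inner_sub_right]
        rw [hyz]
        ring
      rw [hWV] at hsub
      exact eq_of_sub_mem_constSpace hsub
    have hsum : Module.finrank ℝ V + Module.finrank ℝ W = Module.finrank ℝ E :=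
      Submodule.finrank_add_finrank_orthogonal (K := V)
    have hrankV : 1 ≤ Module.finrank ℝ V := by omega
    obtain ⟨v, hvV, hv0⟩ := Submodule.exists_mem_ne_zero_of_ne_bot
      (show V ≠ ⊥ by
        intro hb
        rw [hb] at hrankV
        simp at hrankV)
    have hnv : ⟪n, v⟫ = (0:ℝ) := by
      have h0 := (Submodule.mem_orthogonal V n).mp hnW v hvV
      rw [real_inner_comm]
      exact h0
    have hne_nv : n + v ≠ 0 := by
      intro hcontra
      have hnn : n = -v := eq_neg_of_add_eq_zero_left hcontra
      have hnV : n ∈ V := by rw [hnn]; exact V.neg_mem hvV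
      exact hn0 (hVWtriv n hnW hnV)
    rcases trichotomy hcont hsep (n + v) hne_nv with hmc|hmc|hmc
    · refine ⟨n, hn0, ?_, hQ⟩
      intro x t ht
      have hh := hmc x t ht
      have he : x + t • (n + v) = (x + t • n) + t • v := by module
      rw [he, hmod (x + t • n) (t • v) (V.smul_mem t hvV)] at hh
      exact hh
    · refine ⟨-n, neg_ne_zero.mpr hn0, ?_, ?_⟩
      · intro x t ht
        have hh := hmc x t ht
        have he : x + t • (-(n + v)) = (x + t • (-n)) + (-t) • v := by module
        rw [he, hmod (x + t • (-n)) ((-t) • v) (V.smul_mem (-t) hvV)] at hh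
        exact hh
      · intro y z hyz
        apply hQ
        rw [inner_neg_left, inner_neg_left] at hyz
        have := neg_injective hyz
        exact_mod_cast this
    · exfalso
      obtain ⟨c, hsym⟩ := hmc
      apply hn0
      apply hVWtriv n hnW
      intro x s
      have hqpos : (0:ℝ) < ⟪v,v⟫ := inner_self_pos' hv0
      have hDpos : (0:ℝ) < ⟪n+v,n+v⟫ := inner_self_pos' hne_nv
      have hvq : ⟪n+v, v⟫ = ⟪v,v⟫ := by rw [inner_add_left, hnv, zero_add]
      have key : ∃ r : ℝ, (2*(⟪n+v, x + r • v⟫ - c))/⟪n+v,n+v⟫ = -s := by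
        refine ⟨(-s*⟪n+v,n+v⟫/2 - ⟪n+v,x⟫ + c)/⟪v,v⟫, ?_⟩
        rw [inner_add_right, real_inner_smul_right, hvq]
        field_simp
        ring
      obtain ⟨r, hcoef⟩ := key
      have hh := hsym (x + r • v)
      rw [reflectHyp, hcoef] at hh
      have he1 : x + r • v - (-s) • (n+v) = (x + s • n) + (r+s) • v := by module
      rw [he1] at hh
      rw [hmod (x + s • n) ((r+s) • v) (V.smul_mem (r+s) hvV),
        hmod x (r • v) (V.smul_mem r hvV)] at hh
      exact hh

end Main

end SepAux

/-- A continuous, positive, separable function on `ℝ^N` which is not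
radially symmetric about any point has, through each point `x`, a unique symmetry
axis; consequently, the symmetry axis through any point `y` of that axis coincides
with it. -/
theorem stmt_12 (N : ℕ) (hN : 2 ≤ N)
    (u : EuclideanSpace ℝ (Fin N) → ℝ)
    (hpos : ∀ x, 0 < u x) (hcont : Continuous u)
    (hsep : ∀ (a : EuclideanSpace ℝ (Fin N)) (c : ℝ), a ≠ 0 →
      (∀ x, c < ⟪a, x⟫ → u (reflectHyp a c x) ≤ u x) ∨
      (∀ x, c < ⟪a, x⟫ → u x ≤ u (reflectHyp a c x)))
    (hnotrad : ∀ x : EuclideanSpace ℝ (Fin N),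
      ∃ y z : EuclideanSpace ℝ (Fin N), ‖y - x‖ = ‖z - x‖ ∧ u y ≠ u z) :
    ∀ x : EuclideanSpace ℝ (Fin N), ∃ d : EuclideanSpace ℝ (Fin N),
      d ≠ 0 ∧ IsSymAxis u x d ∧
      (∀ d' : EuclideanSpace ℝ (Fin N), d' ≠ 0 → IsSymAxis u x d' →
        ∃ t : ℝ, d' = t • d) ∧
      (∀ y : EuclideanSpace ℝ (Fin N), (∃ t : ℝ, y = x + t • d) →
        ∀ d' : EuclideanSpace ℝ (Fin N), d' ≠ 0 → IsSymAxis u y d' →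
          ∃ s : ℝ, d' = s • d) := by
  intro x
  have hdim : 2 ≤ Module.finrank ℝ (EuclideanSpace ℝ (Fin N)) := by
    rw [finrank_euclideanSpace_fin]
    exact hN
  obtain ⟨n, hn0, hmono, hQ⟩ := SepAux.main_normal hcont hsep hdim hnotrad
  have hnonconst : ∃ y z, u y ≠ u z := by
    obtain ⟨y, z, _, h⟩ := hnotrad x
    exact ⟨y, z, h⟩
  exact ⟨n, hn0, SepAux.isSymAxis_of_Q hQ x,
    fun d' hd' hax => SepAux.axis_unique hn0 hmono hQ hnonconst x d' hd' hax,
    fun y _ d' hd' hax => SepAux.axis_unique hn0 hmono hQ hnonconst y d' hd' hax⟩
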